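/- arXiv:1602.08236 — 6 statements merged into one kernel-verified Lean document; each statement's English description precedes it below -/
import Mathlib

section
/- Let k ≥ 2, let (F_n^{(k)})_{n≥0} be the k-generalized Fibonacci sequence, let α_1, ..., α_k be the complex roots of Ψ_k(X) = X^k − X^{k−1} − ⋯ − X − 1 with α_1 > 1 real. For integers x > y ≥ 4 and λ = x − y, the algebraic number γ = (F_x^{(k)} − 1) − α_1^{λ}(F_y^{(k)} − 1) is nonzero and satisfies |γ| < (3/2)·α_1^{λ}; moreover for each i with 2 ≤ i ≤ k, |(F_x^{(k)} − 1) − α_i^{λ}(F_y^{(k)} − 1)| < α_1^{x}. -/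
/-- Shifted `k`-generalized Fibonacci sequence: `gfib k` starts with `k - 1` zeros,
then a `1`, and every subsequent term is the sum of the preceding `k` terms. -/
def gfib (k : ℕ) : ℕ → ℕ
  | n =>
    if k = 0 then 0
    else if n + 1 < k then 0
    else if n + 1 = k then 1
    else ∑ i ∈ Finset.range k, gfib k (n - (i + 1))
  decreasing_by omega

/-- The `k`-generalized Fibonacci number `F_n^{(k)}` for `n ≥ 0` (and `k ≥ 2`):
`F_0^{(k)} = 0`, `F_1^{(k)} = 1` (conceptually preceded by `k - 2` further zeros at
negative indices), and `F_{n+k}^{(k)} = F_{n+k-1}^{(k)} + ⋯ + F_n^{(k)}`. -/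
def kFib (k n : ℕ) : ℕ := gfib k (n + k - 2)

/-!
Write `e(n) = F_n - f α^n` for the error of the Binet approximation. For every sequence with
`u(n+k+1) + u(n) = 2 u(n+k)` (a consequence of the `k`-term recurrence, also satisfied by `α^n`)
the defect `D(n) = u(n+k) - ∑_{i<k} α^{-(i+1)} u(n+i)` gets multiplied by `α` at each step, and
`f = f_1` is exactly the constant making `D(0) = 0` for `e`. The weights `α^{-(i+1)}` sum to `1`,
so each `e(n+k)` is a convex combination of the `k` errors before it and `|e| ≤ 1/2` propagates
from the initial block. There it amounts to `f_1 α ≥ 1/2` and `f_1 ≤ 1/2`; the latter reads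
`(k+1) α (2-α) ≤ 2`, which is Bernoulli's inequality once `α > 3/2`.

A root `z ≠ α` has `|z| ≤ 1`: the triangle inequality in `z^k = ∑ z^j` gives `|z| ≤ α`, while
`z^k (2 - z) = 1` gives `|z| ≥ α` when `|z| > 1`, and equality forces `z` to be real. Finally
`γ ≠ 0` since `α⁻¹ = α^{k-1} (2 - α)` is an algebraic integer, so no positive power of `α` is
rational.
-/

open Finset

section

variable {k : ℕ} {a r : ℝ}

lemma gfib_of_lt {n : ℕ} (h : n + 1 < k) : gfib k n = 0 := by
  rw [gfib, if_neg (by omega), if_pos h]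

lemma gfib_pred (hk : k ≠ 0) : gfib k (k - 1) = 1 := by
  rw [gfib, if_neg hk, if_neg (by omega), if_pos (by omega)]

lemma gfib_add (hk : k ≠ 0) (n : ℕ) : gfib k (n + k) = ∑ i ∈ range k, gfib k (n + i) := by
  rw [gfib, if_neg hk, if_neg (by omega), if_neg (by omega),
    ← sum_range_reflect (fun i => gfib k (n + i)) k]
  refine sum_congr rfl fun i hi => ?_
  have := mem_range.1 hi
  congr 1
  omega

lemma gfib_self (hk : k ≠ 0) : gfib k k = 1 := by
  have h := gfib_add hk 0
  simp only [zero_add] at h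
  rw [h, sum_eq_single_of_mem (k - 1) (by simp; omega)]
  · simpa using gfib_pred hk
  · intro i hi hne
    exact gfib_of_lt (by have := mem_range.1 hi; omega)

lemma gfib_add_succ_add (hk : k ≠ 0) (n : ℕ) :
    gfib k (n + k + 1) + gfib k n = 2 * gfib k (n + k) := by
  have h := (sum_range_succ' (fun i => gfib k (n + i)) k).symm.trans
    (sum_range_succ (fun i => gfib k (n + i)) k)
  have hsucc : ∑ i ∈ range k, gfib k (n + (i + 1)) = gfib k (n + k + 1) := by
    rw [add_right_comm, gfib_add hk]
    exact sum_congr rfl fun i _ => by rw [add_right_comm, add_assoc]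
  rw [← gfib_add hk, hsucc, add_zero] at h
  omega

lemma gfib_le_succ (hk : k ≠ 0) (m : ℕ) : gfib k m ≤ gfib k (m + 1) := by
  rcases lt_or_ge (m + 1) k with h | h
  · simp [gfib_of_lt h]
  · obtain ⟨n, rfl⟩ : ∃ n, m = n + (k - 1) := ⟨m + 1 - k, by omega⟩
    rw [show n + (k - 1) + 1 = n + k by omega, gfib_add hk]
    exact single_le_sum (f := fun i => gfib k (n + i)) (fun _ _ => Nat.zero_le _)
      (mem_range.2 (show k - 1 < k by omega))

lemma two_le_gfib (hk : 2 ≤ k) {m : ℕ} (hm : k + 1 ≤ m) : 2 ≤ gfib k m := by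
  have h := gfib_add_succ_add (k := k) (by omega) 0
  rw [zero_add, gfib_self (by omega), gfib_of_lt (n := 0) (by omega)] at h
  calc 2 = gfib k (k + 1) := by omega
    _ ≤ gfib k m := monotone_nat_of_le_succ (gfib_le_succ (by omega)) hm

lemma two_le_kFib (hk : 2 ≤ k) {n : ℕ} (hn : 3 ≤ n) : 2 ≤ kFib k n :=
  two_le_gfib hk (by omega)

lemma sub_one_mul_pow_sub_sum_pow {R : Type*} [CommRing R] (x : R) (k : ℕ) :
    (x - 1) * (x ^ k - ∑ j ∈ range k, x ^ j) = 1 - x ^ k * (2 - x) := by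
  linear_combination -mul_geom_sum x k

lemma pow_mul_two_sub_eq_one {R : Type*} [CommRing R] {x : R}
    (h : x ^ k = ∑ j ∈ range k, x ^ j) : x ^ k * (2 - x) = 1 := by
  linear_combination sub_one_mul_pow_sub_sum_pow x k - (x - 1) * h

lemma sum_inv_pow_mul_pow (k : ℕ) {r : ℝ} (hr : r ≠ 0) :
    (∑ j ∈ range k, r⁻¹ ^ (j + 1)) * r ^ k = ∑ j ∈ range k, r ^ j := by
  rw [sum_mul, ← sum_range_reflect (fun j => r ^ j) k]
  refine sum_congr rfl fun j hj => ?_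
  have := mem_range.1 hj
  rw [inv_pow, inv_mul_eq_div, div_eq_iff (pow_ne_zero _ hr), ← pow_add]
  congr 1
  omega

lemma strictAntiOn_sum_inv_pow (hk : k ≠ 0) :
    StrictAntiOn (fun r : ℝ => ∑ j ∈ range k, r⁻¹ ^ (j + 1)) (Set.Ioi 0) := by
  intro r hr s hs hrs
  refine sum_lt_sum_of_nonempty (nonempty_range_iff.2 hk) fun j _ => ?_
  exact pow_lt_pow_left₀ ((inv_lt_inv₀ hs hr).2 hrs) (inv_pos.2 hs).le (by omega)

lemma sum_inv_pow_eq_one (ha : 0 < a) (hroot : a ^ k = ∑ j ∈ range k, a ^ j) :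
    ∑ j ∈ range k, a⁻¹ ^ (j + 1) = 1 := by
  have h := sum_inv_pow_mul_pow k ha.ne'
  rwa [← hroot, mul_eq_right₀ (pow_ne_zero k ha.ne')] at h

lemma sum_pow_lt_pow_iff (hk : k ≠ 0) (ha : 0 < a) (hroot : a ^ k = ∑ j ∈ range k, a ^ j)
    (hr : 0 < r) : ∑ j ∈ range k, r ^ j < r ^ k ↔ a < r := by
  rw [← sum_inv_pow_mul_pow k hr.ne', mul_lt_iff_lt_one_left (pow_pos hr k),
    ← sum_inv_pow_eq_one ha hroot]
  exact (strictAntiOn_sum_inv_pow hk).lt_iff_gt hr ha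

lemma pow_lt_sum_pow_iff (hk : k ≠ 0) (ha : 0 < a) (hroot : a ^ k = ∑ j ∈ range k, a ^ j)
    (hr : 0 < r) : r ^ k < ∑ j ∈ range k, r ^ j ↔ r < a := by
  rw [← sum_inv_pow_mul_pow k hr.ne', lt_mul_iff_one_lt_left (pow_pos hr k),
    ← sum_inv_pow_eq_one ha hroot]
  exact (strictAntiOn_sum_inv_pow hk).lt_iff_gt ha hr

lemma three_halves_lt (hk : 2 ≤ k) (ha : 0 < a) (hroot : a ^ k = ∑ j ∈ range k, a ^ j) :
    3 / 2 < a := by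
  rw [← pow_lt_sum_pow_iff (by omega) ha hroot (by norm_num)]
  have h := sub_one_mul_pow_sub_sum_pow (3 / 2 : ℝ) k
  have : (3 / 2 : ℝ) ^ 2 ≤ (3 / 2) ^ k := pow_le_pow_right₀ (by norm_num) hk
  nlinarith

lemma succ_mul_mul_two_sub_le_two (hk : 2 ≤ k) (ha : 0 < a)
    (hroot : a ^ k = ∑ j ∈ range k, a ^ j) : (k + 1 : ℝ) * (a * (2 - a)) ≤ 2 := by
  obtain ⟨n, rfl⟩ : ∃ n, k = n + 1 := ⟨k - 1, by omega⟩
  have hkey : a ^ n * (a * (2 - a)) = 1 := by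
    rw [← mul_assoc, ← pow_succ]; exact pow_mul_two_sub_eq_one hroot
  have hbern : 1 + n * (a - 1) ≤ a ^ n := by
    simpa using one_add_mul_le_pow (a := a - 1) (by linarith) n
  have h32 := three_halves_lt hk ha hroot
  have hpos : 0 ≤ a * (2 - a) := by
    by_contra! h
    nlinarith [pow_pos ha n]
  push_cast
  nlinarith [mul_le_mul_of_nonneg_right hbern hpos,
    mul_nonneg (mul_nonneg n.cast_nonneg (sub_nonneg.2 h32.le)) hpos]

/-- The constant `f_1` of the Binet approximation `F_n ≈ f_1 α^n`. -/
noncomputable def binetCoeff (k : ℕ) (a : ℝ) : ℝ := (a - 1) / (a * (2 + (k + 1) * (a - 2)))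

lemma binetCoeff_denom_pos (ha : 1 < a) (hineq : (k + 1 : ℝ) * (a * (2 - a)) ≤ 2) :
    0 < 2 + (k + 1) * (a - 2) := by
  rcases le_or_gt 2 a with h2 | h2
  · positivity
  · nlinarith [mul_lt_mul_of_pos_left ha (by positivity : (0 : ℝ) < (k + 1) * (2 - a))]

lemma binetCoeff_pos (ha : 1 < a) (hineq : (k + 1 : ℝ) * (a * (2 - a)) ≤ 2) :
    0 < binetCoeff k a :=
  div_pos (by linarith) (mul_pos (by linarith) (binetCoeff_denom_pos ha hineq))

lemma binetCoeff_le_half (ha : 1 < a) (hineq : (k + 1 : ℝ) * (a * (2 - a)) ≤ 2) :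
    binetCoeff k a ≤ 1 / 2 := by
  rw [binetCoeff, div_le_iff₀ (mul_pos (by linarith) (binetCoeff_denom_pos ha hineq))]
  linarith

lemma half_le_binetCoeff_mul (hk : 1 ≤ k) (ha : 1 < a) (ha2 : a < 2)
    (hineq : (k + 1 : ℝ) * (a * (2 - a)) ≤ 2) : 1 / 2 ≤ binetCoeff k a * a := by
  have hd := binetCoeff_denom_pos ha hineq
  rw [binetCoeff, div_mul_eq_mul_div, le_div_iff₀ (mul_pos (by linarith) hd)]
  have : (1 : ℝ) ≤ k := by exact_mod_cast hk
  nlinarith [mul_le_mul_of_nonneg_right this (by linarith : (0 : ℝ) ≤ 2 - a)]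

noncomputable def weightedDefect (k : ℕ) (a : ℝ) (u : ℕ → ℝ) (n : ℕ) : ℝ :=
  u (n + k) - ∑ i ∈ range k, a⁻¹ ^ (i + 1) * u (n + i)

lemma weightedDefect_succ (hk : k ≠ 0) (ha : a ≠ 0) (hpow : a⁻¹ ^ k = 2 - a) {u : ℕ → ℝ}
    (hu : ∀ n, u (n + k + 1) + u n = 2 * u (n + k)) (n : ℕ) :
    weightedDefect k a u (n + 1) = a * weightedDefect k a u n := by
  obtain ⟨l, rfl⟩ : ∃ l, k = l + 1 := ⟨k - 1, by omega⟩
  have hshift : a * ∑ i ∈ range (l + 1), a⁻¹ ^ (i + 1) * u (n + i)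
      = ∑ i ∈ range l, a⁻¹ ^ (i + 1) * u (n + 1 + i) + u n := by
    rw [mul_sum, sum_range_succ']
    congr 1
    · refine sum_congr rfl fun i _ => ?_
      rw [pow_succ' _ (i + 1), ← mul_assoc, ← mul_assoc, mul_inv_cancel₀ ha, one_mul,
        ← add_assoc, add_right_comm]
    · simp [ha]
  unfold weightedDefect
  rw [mul_sub, hshift, sum_range_succ, show n + 1 + (l + 1) = n + (l + 1) + 1 by ring,
    show n + 1 + l = n + (l + 1) by ring]
  linear_combination hu n - u (n + (l + 1)) * hpow

lemma weightedDefect_eq_pow_mul (hk : k ≠ 0) (ha : a ≠ 0) (hpow : a⁻¹ ^ k = 2 - a)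
    {u : ℕ → ℝ} (hu : ∀ n, u (n + k + 1) + u n = 2 * u (n + k)) (n : ℕ) :
    weightedDefect k a u n = a ^ n * weightedDefect k a u 0 := by
  induction n with
  | zero => rw [pow_zero, one_mul]
  | succ n ih => rw [weightedDefect_succ hk ha hpow hu, ih, pow_succ']; ring

lemma weightedDefect_sub_mul (u v : ℕ → ℝ) (c : ℝ) (n : ℕ) :
    weightedDefect k a (fun m => u m - c * v m) n
      = weightedDefect k a u n - c * weightedDefect k a v n := by
  simp only [weightedDefect, mul_sub, sum_sub_distrib, mul_sum, mul_left_comm c]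
  ring

lemma weightedDefect_pow (ha : a ≠ 0) (j n : ℕ) :
    weightedDefect k a (fun m => a ^ (m + j)) n = a ^ (n + j) * (a ^ k - k * a⁻¹) := by
  have hterm : ∀ i, a⁻¹ ^ (i + 1) * a ^ (n + i + j) = a ^ (n + j) * a⁻¹ := fun i => by
    have hcancel : a⁻¹ ^ i * a ^ i = 1 := by rw [inv_pow, inv_mul_cancel₀ (pow_ne_zero i ha)]
    rw [add_right_comm, pow_add _ (n + j)]
    linear_combination (a ^ (n + j) * a⁻¹) * hcancel
  simp only [weightedDefect, hterm, sum_const, card_range, nsmul_eq_mul]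
  rw [add_right_comm, pow_add]
  ring

lemma weightedDefect_gfib (hk : k ≠ 0) :
    weightedDefect k a (fun m => (gfib k m : ℝ)) 0 = 1 - a⁻¹ ^ k := by
  simp only [weightedDefect, zero_add, gfib_self hk, Nat.cast_one]
  rw [sum_eq_single_of_mem (k - 1) (by simp; omega), gfib_pred hk, Nat.sub_add_cancel (by omega)]
  · simp
  · intro i hi hne
    rw [gfib_of_lt (by have := mem_range.1 hi; omega), Nat.cast_zero, mul_zero]

lemma abs_le_of_eq_sum_mul {e w : ℕ → ℝ} {B : ℝ} (hw : ∀ i, 0 ≤ w i)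
    (hsum : ∑ i ∈ range k, w i = 1) (he : ∀ n, e (n + k) = ∑ i ∈ range k, w i * e (n + i))
    (hinit : ∀ i < k, |e i| ≤ B) (m : ℕ) : |e m| ≤ B := by
  induction m using Nat.strong_induction_on with
  | _ m ih =>
    rcases lt_or_ge m k with hm | hm
    · exact hinit m hm
    · obtain ⟨n, rfl⟩ := Nat.exists_eq_add_of_le' hm
      calc |e (n + k)| ≤ ∑ i ∈ range k, |w i * e (n + i)| := he n ▸ abs_sum_le_sum_abs _ _
        _ ≤ ∑ i ∈ range k, w i * B := sum_le_sum fun i hi => by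
          rw [abs_mul, abs_of_nonneg (hw i)]
          exact mul_le_mul_of_nonneg_left (ih _ (by have := mem_range.1 hi; omega)) (hw i)
        _ = B := by rw [← sum_mul, hsum, one_mul]

lemma weightedDefect_gfib_sub_binetCoeff (hk : 2 ≤ k) (ha : 1 < a)
    (hroot : a ^ k = ∑ j ∈ range k, a ^ j) (n : ℕ) :
    weightedDefect k a (fun m => (gfib k m : ℝ) - binetCoeff k a * (2 - a) * a ^ (m + 2)) n
      = 0 := by
  have hkey := pow_mul_two_sub_eq_one hroot
  have ha0 : a ≠ 0 := by positivity
  have hpow : a⁻¹ ^ k = 2 - a := by rw [inv_pow, inv_eq_of_mul_eq_one_right hkey]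
  have hu (n : ℕ) : (gfib k (n + k + 1) : ℝ) + gfib k n = 2 * gfib k (n + k) := by
    exact_mod_cast gfib_add_succ_add (by omega) n
  -- `f_1` is defined so that the multiple of the powers has the same defect `a - 1` as `gfib`.
  have hdefect : binetCoeff k a * (2 - a) * (a ^ 2 * (a ^ k - k * a⁻¹)) = a - 1 := by
    have hd := binetCoeff_denom_pos ha (succ_mul_mul_two_sub_le_two hk (by linarith) hroot)
    rw [binetCoeff]
    field_simp
    linear_combination (a - 1) * a * hkey
  rw [weightedDefect_sub_mul, weightedDefect_eq_pow_mul (by omega) ha0 hpow hu,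
    weightedDefect_gfib (by omega), weightedDefect_pow ha0, hpow]
  linear_combination (-a ^ n) * hdefect

lemma abs_gfib_sub_le_of_lt (hk : 2 ≤ k) (ha : 1 < a) (hroot : a ^ k = ∑ j ∈ range k, a ^ j)
    {i : ℕ} (hi : i < k) :
    |(gfib k i : ℝ) - binetCoeff k a * (2 - a) * a ^ (i + 2)| ≤ 1 / 2 := by
  have hkey := pow_mul_two_sub_eq_one hroot
  have ha2 : a < 2 := by nlinarith [pow_pos (by linarith : 0 < a) k]
  have hineq := succ_mul_mul_two_sub_le_two hk (by linarith) hroot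
  have hc := binetCoeff_le_half ha hineq
  have hcpos : 0 < binetCoeff k a * (2 - a) := mul_pos (binetCoeff_pos ha hineq) (by linarith)
  rcases (by omega : i + 1 < k ∨ i + 1 = k) with h | h
  · rw [gfib_of_lt h, Nat.cast_zero, zero_sub, abs_neg, abs_of_pos (by positivity)]
    calc binetCoeff k a * (2 - a) * a ^ (i + 2)
        ≤ binetCoeff k a * (2 - a) * a ^ k :=
          mul_le_mul_of_nonneg_left (pow_le_pow_right₀ ha.le (by omega)) hcpos.le
      _ = binetCoeff k a := by linear_combination binetCoeff k a * hkey
      _ ≤ 1 / 2 := hc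
  · obtain rfl : i = k - 1 := by omega
    have hca := half_le_binetCoeff_mul (by omega) ha ha2 hineq
    have hlast : binetCoeff k a * (2 - a) * a ^ (k - 1 + 2) = binetCoeff k a * a := by
      rw [show k - 1 + 2 = k + 1 by omega, pow_succ]
      linear_combination binetCoeff k a * a * hkey
    rw [gfib_pred (by omega), Nat.cast_one, hlast, abs_le]
    constructor <;> nlinarith

-- Here `gfib k m = F_{m+2-k}` and `(2 - a) a ^ (m + 2) = a ^ (m + 2 - k)`, as `a ^ k (2 - a) = 1`.
theorem abs_gfib_sub_le (hk : 2 ≤ k) (ha : 1 < a) (hroot : a ^ k = ∑ j ∈ range k, a ^ j)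
    (m : ℕ) : |(gfib k m : ℝ) - binetCoeff k a * (2 - a) * a ^ (m + 2)| ≤ 1 / 2 :=
  abs_le_of_eq_sum_mul (w := fun i => a⁻¹ ^ (i + 1)) (fun i => by positivity)
    (sum_inv_pow_eq_one (by linarith) hroot)
    (fun n => sub_eq_zero.1 (weightedDefect_gfib_sub_binetCoeff hk ha hroot n))
    (fun _ hi => abs_gfib_sub_le_of_lt hk ha hroot hi) m

theorem abs_kFib_sub_binetCoeff_mul_pow_le (hk : 2 ≤ k) (ha : 1 < a)
    (hroot : a ^ k = ∑ j ∈ range k, a ^ j) (n : ℕ) :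
    |(kFib k n : ℝ) - binetCoeff k a * a ^ n| ≤ 1 / 2 := by
  have h := abs_gfib_sub_le hk ha hroot (n + k - 2)
  rwa [show n + k - 2 + 2 = n + k by omega, pow_add,
    show binetCoeff k a * (2 - a) * (a ^ n * a ^ k) = binetCoeff k a * a ^ n by
      linear_combination (binetCoeff k a * a ^ n) * pow_mul_two_sub_eq_one hroot] at h

lemma eq_ofReal_of_norm_eq_of_norm_sub_eq {z : ℂ} {b : ℝ} (hb : b ≠ 0) (hz : ‖z‖ = a)
    (hbz : ‖(b : ℂ) - z‖ = b - a) : z = a := by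
  have h1 : z.re * z.re + z.im * z.im = a ^ 2 := by
    rw [← Complex.normSq_apply, ← Complex.sq_norm, hz]
  have h2 : (b - z.re) * (b - z.re) + z.im * z.im = (b - a) ^ 2 := by
    rw [← hbz, Complex.sq_norm, Complex.normSq_apply]
    simp
  have hre : z.re = a := by
    apply mul_left_cancel₀ (mul_ne_zero two_ne_zero hb)
    linear_combination h1 - h2
  have him : z.im = 0 := by
    rw [hre] at h1
    exact mul_self_eq_zero.1 (by linear_combination h1)
  exact Complex.ext (by simpa using hre) (by simpa using him)

theorem norm_le_one_of_pow_eq_sum (hk : k ≠ 0) (ha : 1 < a)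
    (hroot : a ^ k = ∑ j ∈ range k, a ^ j) {z : ℂ} (hz : z ^ k = ∑ j ∈ range k, z ^ j)
    (hne : z ≠ a) : ‖z‖ ≤ 1 := by
  by_contra! hr
  have hr0 : 0 < ‖z‖ := by linarith
  have hle : ‖z‖ ≤ a := by
    rw [← not_lt, ← sum_pow_lt_pow_iff hk (by linarith) hroot hr0, not_lt]
    calc ‖z‖ ^ k = ‖∑ j ∈ range k, z ^ j‖ := by rw [← hz, norm_pow]
      _ ≤ ∑ j ∈ range k, ‖z ^ j‖ := norm_sum_le _ _
      _ = ∑ j ∈ range k, ‖z‖ ^ j := by simp only [norm_pow]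
  have hnorm : ‖z‖ ^ k * ‖2 - z‖ = 1 := by
    simpa using congrArg norm (pow_mul_two_sub_eq_one hz)
  have hge : a ≤ ‖z‖ := by
    rw [← not_lt, ← pow_lt_sum_pow_iff hk (by linarith) hroot hr0, not_lt]
    have h2 : 2 - ‖z‖ ≤ ‖2 - z‖ := by simpa using norm_sub_norm_le (2 : ℂ) z
    have h3 : ‖z‖ ^ k * (2 - ‖z‖) ≤ 1 :=
      hnorm ▸ mul_le_mul_of_nonneg_left h2 (pow_pos hr0 k).le
    have hfactor := sub_one_mul_pow_sub_sum_pow ‖z‖ k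
    exact sub_nonneg.1 (nonneg_of_mul_nonneg_right (by linarith) (by linarith : (0 : ℝ) < ‖z‖ - 1))
  have hza : ‖z‖ = a := le_antisymm hle hge
  refine hne (eq_ofReal_of_norm_eq_of_norm_sub_eq two_ne_zero hza ?_)
  rw [hza] at hnorm
  push_cast
  exact mul_left_cancel₀ (pow_ne_zero k (by linarith))
    (hnorm.trans (pow_mul_two_sub_eq_one hroot).symm)

lemma norm_ofReal_sub_pow_mul_le {z : ℂ} (hz : ‖z‖ ≤ 1) {u v : ℝ} (hu : 0 ≤ u) (hv : 0 ≤ v)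
    (n : ℕ) : ‖(u : ℂ) - z ^ n * v‖ ≤ u + v :=
  calc ‖(u : ℂ) - z ^ n * v‖ ≤ ‖(u : ℂ)‖ + ‖z‖ ^ n * ‖(v : ℂ)‖ := by
        rw [← norm_pow, ← norm_mul]; exact norm_sub_le _ _
    _ ≤ u + 1 * v := by
        rw [Complex.norm_real, Complex.norm_real, Real.norm_of_nonneg hu, Real.norm_of_nonneg hv]
        gcongr
        exact pow_le_one₀ (norm_nonneg z) hz
    _ = u + v := by rw [one_mul]

lemma isIntegral_of_pow_eq_sum {A : Type*} [CommRing A] {x : A}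
    (h : x ^ k = ∑ j ∈ range k, x ^ j) : IsIntegral ℤ x := by
  refine ⟨Polynomial.X ^ k - ∑ j ∈ range k, Polynomial.X ^ j, Polynomial.monic_X_pow_sub ?_, ?_⟩
  · refine (Polynomial.degree_sum_le _ _).trans_lt ((Finset.sup_lt_iff (WithBot.bot_lt_coe k)).2 ?_)
    intro j hj
    exact (Polynomial.degree_X_pow_le j).trans_lt (WithBot.coe_lt_coe.2 (mem_range.1 hj))
  · simp [Polynomial.eval₂_finsetSum, h]

lemma isIntegral_inv_of_pow_eq_sum {K : Type*} [Field K] (hk : k ≠ 0) {x : K}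
    (h : x ^ k = ∑ j ∈ range k, x ^ j) : IsIntegral ℤ x⁻¹ := by
  have hinv : x⁻¹ = x ^ (k - 1) * (2 - x) := by
    refine inv_eq_of_mul_eq_one_right ?_
    rw [← mul_assoc, ← pow_succ', Nat.sub_add_cancel (Nat.one_le_iff_ne_zero.2 hk)]
    exact pow_mul_two_sub_eq_one h
  have hx := isIntegral_of_pow_eq_sum h
  rw [hinv]
  exact (hx.pow _).mul ((isIntegral_natCast (R := ℤ) 2).sub hx)

lemma irrational_pow_of_isIntegral_inv (ha : 1 < a) (hint : IsIntegral ℤ a⁻¹) {l : ℕ}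
    (hl : l ≠ 0) : Irrational (a ^ l) := by
  rintro ⟨q, hq⟩
  have hq' : ((q⁻¹ : ℚ) : ℝ) = a⁻¹ ^ l := by rw [Rat.cast_inv, hq, inv_pow]
  have hqint : IsIntegral ℤ q⁻¹ := by
    rw [← isIntegral_algebraMap_iff (algebraMap ℚ ℝ).injective, eq_ratCast, hq']
    exact hint.pow l
  obtain ⟨n, hn⟩ := IsIntegrallyClosed.isIntegral_iff.1 hqint
  have hn' : (n : ℝ) = a⁻¹ ^ l := by rw [← hq', ← hn]; simp
  have h0 : (0 : ℝ) < n := hn' ▸ pow_pos (inv_pos.2 (by linarith)) l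
  have h1 : (n : ℝ) < 1 := hn' ▸ pow_lt_one₀ (by positivity) (inv_lt_one_of_one_lt₀ ha) hl
  have : (0 : ℤ) < n := by exact_mod_cast h0
  have : n < (1 : ℤ) := by exact_mod_cast h1
  omega

lemma natCast_sub_one_sub_mul_ne_zero {t : ℝ} (ht : Irrational t) (P : ℕ) {Q : ℕ} (hQ : Q ≠ 1) :
    ((P : ℝ) - 1) - t * ((Q : ℝ) - 1) ≠ 0 := by
  have h := (ht.mul_intCast (m := (Q : ℤ) - 1) (by omega)).ne_int ((P : ℤ) - 1)
  push_cast at h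
  exact sub_ne_zero.2 h.symm

end

/-- **Norm estimates in the gcd argument.**
Let `α_1, …, α_k` be the distinct complex roots of `Ψ_k(X) = X^k - X^{k-1} - ⋯ - X - 1`,
with `α_1 = α₁ > 1` real. For integers `x > y ≥ 4` and `λ = x - y`, the algebraic number
`γ = (F_x^{(k)} - 1) - α₁^λ (F_y^{(k)} - 1)` is nonzero and satisfies
`|γ| < (3/2) * α₁^λ`; moreover for each `i` with `2 ≤ i ≤ k` (zero-indexed: `i ≥ 1`),
`|(F_x^{(k)} - 1) - α_i^λ (F_y^{(k)} - 1)| < α₁^x`. -/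
theorem gcd_conjugate_estimates (k : ℕ) (hk : 2 ≤ k) (α : Fin k → ℂ)
    (hdist : Function.Injective α)
    (hroot : ∀ i, (α i) ^ k = ∑ j ∈ Finset.range k, (α i) ^ j)
    (α₁ : ℝ) (hα₁ : 1 < α₁) (hα₁eq : α ⟨0, by omega⟩ = (α₁ : ℂ))
    (x y : ℕ) (hy : 4 ≤ y) (hyx : y < x) :
    (((kFib k x : ℝ) - 1) - α₁ ^ (x - y) * ((kFib k y : ℝ) - 1) ≠ 0 ∧
      |((kFib k x : ℝ) - 1) - α₁ ^ (x - y) * ((kFib k y : ℝ) - 1)| <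
        3 / 2 * α₁ ^ (x - y)) ∧
    ∀ i : Fin k, 1 ≤ (i : ℕ) →
      ‖((kFib k x : ℂ) - 1) - (α i) ^ (x - y) * ((kFib k y : ℂ) - 1)‖ <
        α₁ ^ x := by
  have hrootR : α₁ ^ k = ∑ j ∈ Finset.range k, α₁ ^ j := by
    have h := hroot ⟨0, by omega⟩
    rw [hα₁eq] at h
    exact_mod_cast h
  have hbinet := abs_kFib_sub_binetCoeff_mul_pow_le hk hα₁ hrootR
  have hc := binetCoeff_le_half hα₁ (succ_mul_mul_two_sub_le_two hk (by linarith) hrootR)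
  have hbx := abs_le.1 (hbinet x)
  have hby := abs_le.1 (hbinet y)
  have hFx : 2 ≤ kFib k x := two_le_kFib hk (by omega)
  have hFy : 2 ≤ kFib k y := two_le_kFib hk (by omega)
  have hpow : α₁ ^ (x - y) * α₁ ^ y = α₁ ^ x := by rw [← pow_add, Nat.sub_add_cancel hyx.le]
  have hpow_le : α₁ ^ y ≤ α₁ ^ x := pow_le_pow_right₀ hα₁.le hyx.le
  have hL : 1 < α₁ ^ (x - y) := one_lt_pow₀ hα₁ (by omega)
  refine ⟨⟨?_, ?_⟩, fun i hi => ?_⟩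
  · exact natCast_sub_one_sub_mul_ne_zero (irrational_pow_of_isIntegral_inv hα₁
      (isIntegral_inv_of_pow_eq_sum (by omega) hrootR) (by omega)) _ (by omega)
  · rw [abs_lt]
    constructor <;> nlinarith
  · have hne : α i ≠ α₁ := fun h => absurd (congrArg Fin.val (hdist (h.trans hα₁eq.symm)))
      (by simp; omega)
    have h := norm_ofReal_sub_pow_mul_le (norm_le_one_of_pow_eq_sum (by omega) hα₁ hrootR
      (hroot i) hne) (u := kFib k x - 1) (v := kFib k y - 1) (by simp; omega) (by simp; omega)
      (x - y)
    push_cast at h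
    exact h.trans_lt (by nlinarith [pow_pos (by linarith : 0 < α₁) y])
end

section
/- Let k ≥ 2 and let α_1, ..., α_k ∈ ℂ be the distinct roots of Ψ_k(X) = X^k − X^{k−1} − ⋯ − X − 1. Then |∏_{i=1}^{k} ((k+1)α_i − 2k)| = (2^{k+1} k^k − (k+1)^{k+1})/(k − 1). -/
/-!
Since the `α i` are `k` distinct roots of the monic degree-`k` polynomial `Ψ_k`, we get
`∏ (X - α i) = Ψ_k`, so the product equals `(-(k+1))^k Ψ_k(x)` at `x = 2k/(k+1)`. The identity
`(X - 1) Ψ_k = X^(k+1) - 2X^k + 1` evaluates this in closed form. The sign of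
`2^(k+1) k^k - (k+1)^(k+1)` comes from Bernoulli's inequality `(1 + t)^k ≥ 1 + kt` at
`t = (k-1)/(k+1)`.
-/

open Polynomial Finset

/-- The paper's `Ψ_k`. -/
noncomputable def multinacciPoly (R : Type*) [CommRing R] (k : ℕ) : R[X] :=
  X ^ k - ∑ j ∈ range k, X ^ j

theorem degree_geom_sum_X_lt {R : Type*} [CommRing R] [Nontrivial R] (k : ℕ) :
    (∑ j ∈ range k, (X : R[X]) ^ j).degree < k := by
  refine (degree_sum_le _ _).trans_lt ((Finset.sup_lt_iff (WithBot.bot_lt_coe k)).2 fun j hj => ?_)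
  rw [degree_X_pow]
  exact Nat.cast_lt.2 (mem_range.1 hj)

namespace multinacciPoly

variable {R : Type*} [CommRing R] (k : ℕ)

theorem monic [Nontrivial R] : (multinacciPoly R k).Monic :=
  monic_X_pow_sub (degree_geom_sum_X_lt k)

theorem natDegree [Nontrivial R] : (multinacciPoly R k).natDegree = k := by
  refine natDegree_eq_of_degree_eq_some ?_
  rw [multinacciPoly, degree_sub_eq_left_of_degree_lt, degree_X_pow]
  simpa using degree_geom_sum_X_lt k

theorem isRoot_iff {x : R} :
    (multinacciPoly R k).IsRoot x ↔ x ^ k = ∑ j ∈ range k, x ^ j := by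
  simp [multinacciPoly, eval_finsetSum, sub_eq_zero]

theorem X_sub_one_mul : (X - 1) * multinacciPoly R k = X ^ (k + 1) - 2 * X ^ k + 1 := by
  rw [multinacciPoly, mul_sub, mul_comm _ (∑ j ∈ range k, _), geom_sum_mul]
  ring

theorem eval_two_mul_div {K : Type*} [Field K] {k : ℕ} (hk : (k : K) + 1 ≠ 0) :
    ((k : K) - 1) * (k + 1) ^ k * (multinacciPoly K k).eval (2 * k / (k + 1) : K) =
      (k + 1) ^ (k + 1) - 2 ^ (k + 1) * k ^ k := by
  set x : K := 2 * k / (k + 1)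
  have h := congrArg (eval x) (X_sub_one_mul (R := K) k)
  simp only [eval_mul, eval_sub, eval_add, eval_pow, eval_X, eval_one, eval_ofNat] at h
  calc ((k : K) - 1) * (k + 1) ^ k * (multinacciPoly K k).eval x
      = (k + 1) ^ (k + 1) * ((x - 1) * (multinacciPoly K k).eval x) := by
        simp only [x]; field_simp; ring
    _ = (k + 1) ^ (k + 1) * (x ^ (k + 1) - 2 * x ^ k + 1) := by rw [h]
    _ = (k + 1) ^ (k + 1) - 2 ^ (k + 1) * k ^ k := by
        simp only [x, div_pow]; field_simp; ring

end multinacciPoly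

theorem prod_X_sub_C_eq_of_injective_of_isRoot {R : Type*} [CommRing R] [IsDomain R]
    {ι : Type*} [Fintype ι] {p : R[X]} (hp : p.Monic) (hdeg : p.natDegree = Fintype.card ι)
    {α : ι → R} (hα : Function.Injective α) (hroot : ∀ i, p.IsRoot (α i)) :
    ∏ i, (X - C (α i)) = p := by
  set s : Multiset R := univ.val.map α
  have hs : s ≤ p.roots := by
    refine (Multiset.le_iff_subset (univ.nodup.map hα)).2 fun a ha => ?_
    obtain ⟨i, -, rfl⟩ := Multiset.mem_map.1 ha
    exact (mem_roots hp.ne_zero).2 (hroot i)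
  have hprod : ∏ i, (X - C (α i)) = (s.map fun a => X - C a).prod := by
    rw [Finset.prod_eq_multiset_prod, Multiset.map_map]; rfl
  rw [hprod]
  refine (eq_of_monic_of_dvd_of_natDegree_le (monic_multisetProd_X_sub_C s) hp
    ((Multiset.prod_X_sub_C_dvd_iff_le_roots hp.ne_zero s).2 hs) ?_).symm
  simp [s, hdeg]

theorem prod_mul_sub_eq_eval {K ι : Type*} [Field K] [Fintype ι] {a : K} (ha : a ≠ 0) (b : K)
    (α : ι → K) :
    ∏ i, (a * α i - b) = (-a) ^ Fintype.card ι * (∏ i, (X - C (α i))).eval (b / a) := by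
  rw [eval_prod, ← Finset.card_univ, ← prod_const, ← prod_mul_distrib]
  refine prod_congr rfl fun i _ => ?_
  simp only [eval_sub, eval_X, eval_C]
  field_simp
  ring

theorem succ_pow_succ_le_two_pow_succ_mul_pow (n : ℕ) :
    ((n : ℝ) + 1) ^ (n + 1) ≤ 2 ^ (n + 1) * (n : ℝ) ^ n := by
  have hn : (0 : ℝ) < n + 1 := by positivity
  set t : ℝ := (n - 1) / (n + 1)
  have ht : (1 + t) * (n + 1) = 2 * n := by simp only [t]; field_simp; ring
  have hnt : (n : ℝ) + 1 ≤ 2 * (1 + n * t) := by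
    rw [← mul_le_mul_iff_of_pos_right hn]
    have : 2 * (1 + n * t) * (n + 1) = 2 * n ^ 2 + 2 := by simp only [t]; field_simp; ring
    nlinarith [sq_nonneg ((n : ℝ) - 1)]
  have bernoulli : 1 + n * t ≤ (1 + t) ^ n :=
    one_add_mul_le_pow (by simp only [t]; rw [le_div_iff₀ hn]; linarith) n
  calc ((n : ℝ) + 1) ^ (n + 1) = (n + 1) ^ n * (n + 1) := pow_succ _ _
    _ ≤ (n + 1) ^ n * (2 * (1 + n * t)) := by gcongr
    _ ≤ (n + 1) ^ n * (2 * (1 + t) ^ n) := by gcongr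
    _ = 2 ^ (n + 1) * (n : ℝ) ^ n := by
      rw [mul_left_comm, ← mul_pow, mul_comm _ (1 + t), ht]; ring

open multinacciPoly in
/-- **The norm of `(k+1)α₁ - 2k`.** Let `α_1, …, α_k` be the distinct complex roots of
`Ψ_k(X) = X^k - X^{k-1} - ⋯ - X - 1`. Then
`|∏_{i=1}^k ((k+1) α_i - 2k)| = (2^{k+1} k^k - (k+1)^{k+1}) / (k - 1)`. -/
theorem abs_prod_linear_in_roots (k : ℕ) (hk : 2 ≤ k) (α : Fin k → ℂ)
    (hdist : Function.Injective α)
    (hroot : ∀ i, (α i) ^ k = ∑ j ∈ Finset.range k, (α i) ^ j) :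
    ‖∏ i, (((k : ℂ) + 1) * α i - 2 * (k : ℂ))‖ =
      ((2 : ℝ) ^ (k + 1) * (k : ℝ) ^ k - ((k : ℝ) + 1) ^ (k + 1)) / ((k : ℝ) - 1) := by
  have hk1 : (1 : ℝ) < k := by exact_mod_cast hk
  have hkC : (k : ℂ) + 1 ≠ 0 := by exact_mod_cast k.succ_ne_zero
  have hΨ : ∏ i, (X - C (α i)) = multinacciPoly ℂ k :=
    prod_X_sub_C_eq_of_injective_of_isRoot (monic k)
      (by rw [multinacciPoly.natDegree, Fintype.card_fin]) hdist fun i => (isRoot_iff k).2 (hroot i)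
  have hprod : (((k : ℝ) - 1 : ℝ) : ℂ) * ∏ i, (((k : ℂ) + 1) * α i - 2 * (k : ℂ)) =
      (-1) ^ k * ((((k : ℝ) + 1) ^ (k + 1) - 2 ^ (k + 1) * (k : ℝ) ^ k : ℝ) : ℂ) := by
    rw [prod_mul_sub_eq_eval hkC, hΨ, Fintype.card_fin, neg_pow]
    push_cast
    rw [← eval_two_mul_div hkC]
    ring
  have hnorm := congrArg norm hprod
  simp only [norm_mul, norm_pow, norm_neg, norm_one, one_pow, one_mul, Complex.norm_real,
    Real.norm_eq_abs] at hnorm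
  rw [abs_of_pos (by linarith),
    abs_of_nonpos (by linarith [succ_pow_succ_le_two_pow_succ_mul_pow k])] at hnorm
  rw [eq_div_iff (by linarith)]
  linarith
end

section
/- The Diophantine equation 2^{k+1} k^k − (k+1)^{k+1} = w² has no solutions in integers k, w with k ≥ 2. -/
/-!
Reducing modulo `k` gives `k ∣ w ^ 2 + 1`, and `-1` is not a square modulo a number `≡ 3 (mod 4)`
(its Jacobi symbol is `-1`). This settles `k ≡ 3 (mod 4)` at once; for even `k` a computation
modulo 8 forces `k ≡ 6 (mod 8)`, and then `k / 2 ≡ 3 (mod 4)` divides `w ^ 2 + 1`.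

For `k + 1 = 2 e` the equation divided by `2 ^ (k + 1)` reads `v ^ 2 + (e ^ e) ^ 2 = k ^ k`. If
`k ≡ 1 (mod 4)`, the Gaussian integer `v + e ^ e i` is coprime to its conjugate, hence a `k`-th
power `α ^ k` (units satisfy `u ^ k = u`), with `α = x + y i` and `x ^ 2 + y ^ 2 = k`. Then
`e ^ e = Im (α ^ k) = y (k x ^ (k - 1) + y c)` with coprime factors, so `|y|` is an `e`-th power;
`|y| ≥ 2 ^ e` would give `k ≥ y ^ 2 ≥ 2 ^ (k + 1)`, so `y = ±1`. Now `Im (α ^ k) ≡ y (mod x ^ 2)`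
while `e ^ e ≡ e (mod x ^ 2)`, which leaves only `x ^ 2 = 4`, i.e. `k = 5`, ruled out modulo 3.
-/

open Zsqrtd

theorem Int.sq_emod_eight (w : ℤ) : w ^ 2 % 8 = 0 ∨ w ^ 2 % 8 = 1 ∨ w ^ 2 % 8 = 4 := by
  have h₀ := Int.emod_nonneg w (by norm_num : (8 : ℤ) ≠ 0)
  have h₈ := Int.emod_lt_of_pos w (by norm_num : (0 : ℤ) < 8)
  rw [sq, Int.mul_emod]
  interval_cases w % 8 <;> simp

theorem Int.pow_modEq_self_mod_eight_of_odd {m : ℤ} (hm : Odd m) {n : ℕ} (hn : Odd n) :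
    m ^ n ≡ m [ZMOD 8] := by
  obtain ⟨j, rfl⟩ := hn
  have hsq : m ^ 2 ≡ 1 [ZMOD 8] := by
    have := Int.sq_emod_eight m
    have := Int.odd_iff.mp (hm.pow (n := 2))
    unfold Int.ModEq
    omega
  rw [pow_succ, pow_mul]
  simpa using (hsq.pow j).mul_right m

theorem Int.natCast_not_dvd_sq_add_one_of_mod_four_eq_three {u : ℕ} (hu : u % 4 = 3) (w : ℤ) :
    ¬ (u : ℤ) ∣ w ^ 2 + 1 := by
  intro h
  have hJ : jacobiSym (-1) u = -1 := by
    rw [jacobiSym.at_neg_one (Nat.odd_iff.mpr (by omega)), ZMod.χ₄_nat_three_mod_four hu]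
  apply ZMod.nonsquare_of_jacobiSym_eq_neg_one hJ
  have : ((w ^ 2 + 1 : ℤ) : ZMod u) = 0 := (ZMod.intCast_zmod_eq_zero_iff_dvd _ _).mpr h
  exact ⟨w, by push_cast at this ⊢; linear_combination -this⟩

theorem Zsqrtd.exists_im_pow_eq {d : ℤ} (x y : ℤ) (n : ℕ) :
    ∃ c : ℤ, ((⟨x, y⟩ : ℤ√d) ^ n).im = y * (n * x ^ (n - 1) + y * c) := by
  obtain ⟨c, hc⟩ := Polynomial.powAddExpansion (x : ℤ√d) (sqrtd * (y : ℤ√d)) n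
  refine ⟨d * c.im, ?_⟩
  rw [decompose, hc, ← Int.cast_pow x n, ← Int.cast_pow x (n - 1), mul_pow, sq sqrtd, dmuld,
    ← Int.cast_pow y 2]
  simp only [im_add, im_mul, re_mul, re_intCast, im_intCast, re_natCast, im_natCast, re_sqrtd,
    im_sqrtd]
  ring

namespace GaussianInt

theorem pow_four_eq_one_of_isUnit {u : GaussianInt} (hu : IsUnit u) : u ^ 4 = 1 := by
  have hnorm := (norm_eq_one_iff' (by norm_num) u).mpr hu
  rw [norm_def] at hnorm
  have hre_im : u.re * u.im = 0 := by
    by_contra h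
    obtain ⟨hre, him⟩ := mul_ne_zero_iff.mp h
    nlinarith [mul_self_pos.mpr hre, mul_self_pos.mpr him]
  ext
  · simp [pow_succ, re_mul, im_mul]
    linear_combination (u.re ^ 2 + u.im ^ 2 + 1) * hnorm - 8 * u.re * u.im * hre_im
  · simp [pow_succ, re_mul, im_mul]
    linear_combination 4 * (u.re ^ 2 - u.im ^ 2) * hre_im

theorem exists_pow_eq_of_mul_eq_pow {a b c : GaussianInt} {k : ℕ} (hk : k % 4 = 1)
    (hab : IsCoprime a b) (h : a * b = c ^ k) : ∃ α : GaussianInt, α ^ k = a := by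
  obtain ⟨α, u, hu⟩ := exists_associated_pow_of_mul_eq_pow' hab h
  refine ⟨α * u, ?_⟩
  have hk' : k = 4 * (k / 4) + 1 := by omega
  rw [mul_pow, hk', pow_succ (u : GaussianInt), pow_mul, pow_four_eq_one_of_isUnit u.isUnit,
    one_pow, one_mul, ← hk', hu]

-- `2 z.im = i (star z - z)` and `z.norm = z * star z`, so a Bézout relation for
-- `(2 z.im, z.norm)` yields one for `(z, star z)`.
theorem isCoprime_star_of_isCoprime {z : GaussianInt} (h : IsCoprime (2 * z.im) z.norm) :
    IsCoprime z (star z) := by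
  obtain ⟨a, b, hab⟩ := h
  refine ⟨⟨b * z.re, -a - b * z.im⟩, ⟨0, a⟩, ?_⟩
  rw [norm_def] at hab
  ext
  · simp [re_mul]
    linear_combination hab
  · simp [im_mul]
    ring

theorem im_pow_modEq {x y : ℤ} (hy : y ^ 2 = 1) {k : ℕ} (hk : k % 4 = 1) :
    ((⟨x, y⟩ : GaussianInt) ^ k).im ≡ y [ZMOD x ^ 2] := by
  obtain ⟨c, hc⟩ := Polynomial.powAddExpansion (⟨0, y⟩ : GaussianInt) x k
  have hi : (⟨0, y⟩ : GaussianInt) ^ 2 = -1 := by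
    ext <;> simp [sq, re_mul, im_mul]
    linear_combination hy
  have hpow : (⟨0, y⟩ : GaussianInt) ^ (k - 1) = 1 := by
    rw [show k - 1 = 2 * (2 * (k / 4)) by omega, pow_mul, hi, pow_mul]
    simp
  have hpow' : (⟨0, y⟩ : GaussianInt) ^ k = ⟨0, y⟩ := by
    rw [show k = k - 1 + 1 by omega, pow_succ, hpow, one_mul]
  have hx : (⟨x, y⟩ : GaussianInt) = ⟨0, y⟩ + x := by ext <;> simp
  rw [hx, hc, hpow, hpow', Int.modEq_iff_dvd]
  refine ⟨-c.im, ?_⟩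
  rw [← Int.cast_pow x 2]
  simp only [im_add, im_mul, re_mul, re_intCast, im_intCast, re_natCast, im_natCast, re_one,
    im_one]
  ring

end GaussianInt

namespace KeyDiophantineEq

theorem sq_eq_one_of_mul_eq_pow {x y c : ℤ} {k e : ℕ} (hk : x ^ 2 + y ^ 2 = k)
    (he : k + 1 = 2 * e) (h : y * (k * x ^ (k - 1) + y * c) = (e : ℤ) ^ e) : y ^ 2 = 1 := by
  have hek : IsCoprime (e : ℤ) k := ⟨2, -1, by omega⟩
  have hyk : IsCoprime y k := hek.pow_left.of_isCoprime_of_dvd_left (Dvd.intro _ h)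
  have hyx : IsCoprime y x := by
    rw [← hk, sq y] at hyk
    exact (IsCoprime.pow_right_iff two_pos).mp hyk.of_add_mul_left_right
  obtain ⟨f, hf⟩ := exists_associated_pow_of_mul_eq_pow'
    ((hyk.mul_right hyx.pow_right).add_mul_left_right c) h
  have hyf : y.natAbs = f.natAbs ^ e := by
    rw [← Int.natAbs_pow]
    exact (Int.associated_iff_natAbs.mp hf).symm
  have hy : (y.natAbs : ℤ) ^ 2 = y ^ 2 := Int.natAbs_sq y
  obtain hf0 | hf1 | hf2 : f.natAbs = 0 ∨ f.natAbs = 1 ∨ 2 ≤ f.natAbs := by omega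
  · rw [hf0, zero_pow (by omega), Int.natAbs_eq_zero] at hyf
    subst hyf
    have : (e : ℤ) ^ e ≠ 0 := pow_ne_zero _ (by omega)
    simp_all
  · rw [← hy, hyf, hf1]
    norm_num
  · have hle : 2 ^ (k + 1) ≤ y.natAbs ^ 2 := by
      rw [hyf, he, mul_comm, pow_mul]
      gcongr
    have hlt : k < 2 ^ (k + 1) :=
      Nat.lt_two_pow_self.trans (Nat.pow_lt_pow_right one_lt_two k.lt_succ_self)
    have : y.natAbs ^ 2 ≤ k := by
      have : y ^ 2 ≤ k := by nlinarith [sq_nonneg x]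
      exact_mod_cast hy ▸ this
    omega

theorem sq_eq_four_of_pow_modEq {x y : ℤ} {e : ℕ} (hy : y ^ 2 = 1) (he : x ^ 2 + 2 = 2 * e)
    (hx : x ≠ 0) (h : (e : ℤ) ^ e ≡ y [ZMOD x ^ 2]) : x ^ 2 = 4 := by
  obtain ⟨t, rfl⟩ : Even x := (Int.even_pow' two_ne_zero).mp ⟨e - 1, by linarith⟩
  have het : (e : ℤ) = 2 * t ^ 2 + 1 := by linarith [show (t + t) ^ 2 = 4 * t ^ 2 by ring]
  have hsq : (e : ℤ) ^ 2 ≡ 1 [ZMOD (t + t) ^ 2] :=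
    Int.modEq_iff_dvd.mpr ⟨-(t ^ 2 + 1), by rw [het]; ring⟩
  have hpow : (e : ℤ) ^ e ≡ e [ZMOD (t + t) ^ 2] := by
    obtain ⟨m, hm⟩ : Odd e := Nat.odd_iff.mpr (by omega)
    rw [show (e : ℤ) ^ e = ((e : ℤ) ^ 2) ^ m * e by rw [← pow_mul, ← pow_succ, hm]]
    simpa using (hsq.pow m).mul_right (e : ℤ)
  have ht : 0 < t ^ 2 := by
    have : t ≠ 0 := by rintro rfl; simp at hx
    positivity
  have hle := Int.le_of_dvd (by rcases sq_eq_one_iff.mp hy with rfl | rfl <;> linarith)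
    (h.symm.trans hpow).dvd
  rcases sq_eq_one_iff.mp hy with rfl | rfl <;> nlinarith

theorem eq_five_of_im_pow_eq {α : GaussianInt} {k e : ℕ} (hk : 2 ≤ k) (hk4 : k % 4 = 1)
    (he : k + 1 = 2 * e) (hnorm : α.norm = k) (h : (α ^ k).im = (e : ℤ) ^ e) : k = 5 := by
  obtain ⟨x, y⟩ := α
  have hxy : x ^ 2 + y ^ 2 = k := by
    rw [← hnorm, norm_def]
    ring
  obtain ⟨c, hc⟩ := exists_im_pow_eq (d := -1) x y k
  have hy : y ^ 2 = 1 := sq_eq_one_of_mul_eq_pow hxy he (hc ▸ h)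
  have hmod := GaussianInt.im_pow_modEq (x := x) hy hk4
  rw [h] at hmod
  have hx : x ≠ 0 := by rintro rfl; omega
  have hx4 := sq_eq_four_of_pow_modEq hy (by omega) hx hmod
  omega

theorem eq_five_of_sq_add_sq_eq_pow {k e : ℕ} (hk : 2 ≤ k) (hk4 : k % 4 = 1)
    (he : k + 1 = 2 * e) {v : ℤ} (h : v ^ 2 + ((e : ℤ) ^ e) ^ 2 = k ^ k) : k = 5 := by
  set z : GaussianInt := ⟨v, e ^ e⟩
  have hnorm : z.norm = k ^ k := by
    rw [norm_def]
    linear_combination h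
  have hcop : IsCoprime z (star z) := by
    apply GaussianInt.isCoprime_star_of_isCoprime
    have h2k : IsCoprime (2 : ℤ) k := ⟨-((k / 2 : ℕ) : ℤ), 1, by omega⟩
    have hek : IsCoprime (e : ℤ) k := ⟨2, -1, by omega⟩
    rw [hnorm]
    exact (h2k.mul_left hek.pow_left).pow_right
  have hmul : z * star z = (k : GaussianInt) ^ k := by
    rw [← norm_eq_mul_conj, hnorm]
    push_cast
    rfl
  obtain ⟨α, hα⟩ := GaussianInt.exists_pow_eq_of_mul_eq_pow hk4 hcop hmul
  have hαnorm : α.norm = k := by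
    refine (pow_left_inj₀ (GaussianInt.norm_nonneg α) (Nat.cast_nonneg k) (by omega : k ≠ 0)).mp ?_
    rw [← hnorm, ← hα]
    exact (map_pow normMonoidHom α k).symm
  exact eq_five_of_im_pow_eq hk hk4 he hαnorm (by rw [hα])

theorem dvd_sq_add_one {k : ℕ} (hk : k ≠ 0) {w : ℤ}
    (h : (2 : ℤ) ^ (k + 1) * (k : ℤ) ^ k - ((k : ℤ) + 1) ^ (k + 1) = w ^ 2) :
    (k : ℤ) ∣ w ^ 2 + 1 := by
  have h₁ : (k : ℤ) ∣ ((k : ℤ) + 1) ^ (k + 1) - 1 := by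
    simpa using sub_dvd_pow_sub_pow ((k : ℤ) + 1) 1 (k + 1)
  have h₂ : (k : ℤ) ∣ 2 ^ (k + 1) * (k : ℤ) ^ k := (dvd_pow_self _ hk).mul_left _
  rw [show w ^ 2 + 1 = 2 ^ (k + 1) * (k : ℤ) ^ k - (((k : ℤ) + 1) ^ (k + 1) - 1) by
    rw [← h]; ring]
  exact h₂.sub h₁

theorem emod_eight_eq_six_of_even {k : ℕ} (hk : 2 ≤ k) (hev : Even k) {w : ℤ}
    (h : (2 : ℤ) ^ (k + 1) * (k : ℤ) ^ k - ((k : ℤ) + 1) ^ (k + 1) = w ^ 2) :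
    k % 8 = 6 := by
  have h₈ : (2 : ℤ) ^ (k + 1) * (k : ℤ) ^ k ≡ 0 [ZMOD 8] := by
    refine Int.modEq_zero_iff_dvd.mpr (Dvd.dvd.mul_right ⟨2 ^ (k - 2), ?_⟩ _)
    rw [show k + 1 = 3 + (k - 2) by omega, pow_add]
    norm_num
  have hk2 := Nat.even_iff.mp hev
  have hodd : ((k : ℤ) + 1) ^ (k + 1) ≡ k + 1 [ZMOD 8] :=
    Int.pow_modEq_self_mod_eight_of_odd (Int.odd_iff.mpr (by omega)) (Nat.odd_iff.mpr (by omega))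
  have hw := h₈.sub hodd
  rw [h] at hw
  have := Int.sq_emod_eight w
  unfold Int.ModEq at hw
  omega

theorem exists_sq_add_sq_of_odd {k e : ℕ} (he : k + 1 = 2 * e) {w : ℤ}
    (h : (2 : ℤ) ^ (k + 1) * (k : ℤ) ^ k - ((k : ℤ) + 1) ^ (k + 1) = w ^ 2) :
    ∃ v : ℤ, v ^ 2 + ((e : ℤ) ^ e) ^ 2 = k ^ k := by
  have h₂ : (2 : ℤ) ^ (k + 1) = (2 ^ e) ^ 2 := by rw [← pow_mul, he, mul_comm]
  have he' : (k : ℤ) + 1 = 2 * e := by exact_mod_cast he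
  rw [h₂, he', he, pow_mul', mul_pow, mul_pow, ← mul_sub] at h
  obtain ⟨v, rfl⟩ := (Int.pow_dvd_pow_iff two_ne_zero).mp (Dvd.intro _ h)
  refine ⟨v, ?_⟩
  rw [mul_pow] at h
  linarith [mul_left_cancel₀ (pow_ne_zero 2 (pow_ne_zero e two_ne_zero)) h]

end KeyDiophantineEq

open KeyDiophantineEq

/-- **The Diophantine equation `2^{k+1} k^k - (k+1)^{k+1} = w²` has no solutions
with `k ≥ 2`.** -/
theorem no_solutions_key_diophantine_eq (k : ℕ) (hk : 2 ≤ k) (w : ℤ) :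
    (2 : ℤ) ^ (k + 1) * (k : ℤ) ^ k - ((k : ℤ) + 1) ^ (k + 1) ≠ w ^ 2 := by
  intro h
  have hdvd := dvd_sq_add_one (by omega) h
  rcases Nat.even_or_odd k with hev | hodd
  · have h6 := emod_eight_eq_six_of_even hk hev h
    have hu : ((k / 2 : ℕ) : ℤ) ∣ k := Int.natCast_dvd_natCast.mpr ⟨2, by omega⟩
    exact Int.natCast_not_dvd_sq_add_one_of_mod_four_eq_three (by omega) w (hu.trans hdvd)
  obtain ⟨e, he⟩ : ∃ e, k + 1 = 2 * e := ⟨(k + 1) / 2, by grind⟩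
  rcases (by grind : k % 4 = 1 ∨ k % 4 = 3) with hk4 | hk4
  · obtain ⟨v, hv⟩ := exists_sq_add_sq_of_odd he h
    obtain rfl := eq_five_of_sq_add_sq_eq_pow hk hk4 he hv
    -- `2 ^ 6 * 5 ^ 5 - 6 ^ 6 = 153344 ≡ 2 (mod 3)`
    have h₃ := congrArg (Int.cast : ℤ → ZMod 3) h
    push_cast at h₃
    generalize (w : ZMod 3) = a at h₃
    revert a
    decide
  · exact Int.natCast_not_dvd_sq_add_one_of_mod_four_eq_three hk4 w hdvd
end

section
/- If k is a positive integer with k ≡ 3 (mod 4) and 2^{k+1} k^k − (k+1)^{k+1} = w² for some integer w, then 2^{(k+1)/2} divides w. -/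
/-- If `k` is a positive integer with `k ≡ 3 (mod 4)` and
`2^{k+1} k^k - (k+1)^{k+1} = w²` for some integer `w`, then `2^{(k+1)/2} ∣ w`. -/
theorem two_pow_dvd_of_key_eq (k : ℕ) (hk : 0 < k) (hk4 : k % 4 = 3) (w : ℤ)
    (hw : (2 : ℤ) ^ (k + 1) * (k : ℤ) ^ k - ((k : ℤ) + 1) ^ (k + 1) = w ^ 2) :
    (2 : ℤ) ^ ((k + 1) / 2) ∣ w := by
  obtain ⟨t, ht⟩ : (2 : ℤ) ∣ ((k : ℤ) + 1) := ⟨((k : ℤ) + 1) / 2, by omega⟩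
  have hdvd : ((2 : ℤ) ^ ((k + 1) / 2)) ^ 2 ∣ w ^ 2 := by
    have h1 : ((2 : ℤ) ^ ((k + 1) / 2)) ^ 2 = 2 ^ (k + 1) := by
      rw [← pow_mul]
      congr 1
      omega
    rw [h1, ← hw, ht, mul_pow]
    exact dvd_sub (Dvd.intro _ rfl) (Dvd.intro _ rfl)
  exact (Int.pow_dvd_pow_iff (two_ne_zero)).mp hdvd
end

section
/- If k is a positive integer with k ≡ 3 (mod 4), then there is no integer w_1 with k^k − ((k+1)/2)^{k+1} = w_1²; that is, k^k − ((k+1)/2)^{k+1} is not a perfect square. -/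
/-- If `k` is a positive integer with `k ≡ 3 (mod 4)`, then
`k^k - ((k+1)/2)^{k+1}` is not a perfect square. -/
theorem reduced_expr_not_square (k : ℕ) (hk : 0 < k) (hk4 : k % 4 = 3) :
    ¬∃ w₁ : ℤ, (k : ℤ) ^ k - (((k + 1) / 2 : ℕ) : ℤ) ^ (k + 1) = w₁ ^ 2 := by
  rintro ⟨w, h⟩
  obtain ⟨m, rfl⟩ : ∃ m, k = 4 * m + 3 := ⟨k / 4, by omega⟩
  have hd : (4 * m + 3 + 1) / 2 = 2 * m + 2 := by omega
  rw [hd] at h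
  have h4 := congrArg (Int.cast : ℤ → ZMod 4) h
  push_cast at h4
  have e1 : ((4 * (m : ZMod 4) + 3)) ^ (4 * m + 3) = 3 := by
    have : (4 : ZMod 4) = 0 := by decide
    rw [this, zero_mul, zero_add]
    have : 4 * m + 3 = 2 * (2 * m + 1) + 1 := by ring
    rw [this, pow_succ, pow_mul]
    norm_num
    have h9 : ((9:ZMod 4)) = 1 := by decide
    rw [h9, one_pow, one_mul]
  have e2 : ((2 * (m : ZMod 4) + 2)) ^ (4 * m + 3 + 1) = 0 := by
    have : 4 * m + 3 + 1 = 2 * (2 * m + 2) := by ring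
    rw [this, pow_mul]
    have : (2 * (m : ZMod 4) + 2) ^ 2 = 0 := by
      have : (2 * (m : ZMod 4) + 2) ^ 2 = 4 * (m + 1) ^ 2 := by ring
      rw [this]
      have h4 : (4 : ZMod 4) = 0 := by decide
      rw [h4, zero_mul]
    rw [this, zero_pow (by omega)]
  rw [e1, e2, sub_zero] at h4
  revert h4
  generalize ((w : ZMod 4)) = v
  revert v
  decide
end

section
/- Let k be a positive integer with k ≡ 3 (mod 4) and suppose the integer w_1 satisfies k^k = w_1² + ((k+1)/2)^{k+1}. Then w_1 and (k+1)/2 are coprime: gcd(w_1, (k+1)/2) = 1. -/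
/-! Since `k` is odd, `m = (k+1)/2` satisfies `2m - k = 1`, so `m` is coprime to `k^k`.
A common divisor of `w₁` and `m` divides `k^k = w₁² + m^(k+1)`, hence is a unit. -/

theorem IsCoprime.of_isCoprime_sq_add_pow {R : Type*} [CommRing R] {w m : R} {e : ℕ}
    (he : e ≠ 0) (h : IsCoprime m (w ^ 2 + m ^ e)) : IsCoprime w m := by
  obtain ⟨d, rfl⟩ := Nat.exists_eq_succ_of_ne_zero he
  rw [pow_succ' m, IsCoprime.add_mul_left_right_iff] at h
  exact (IsCoprime.pow_right_iff two_pos).mp h |>.symm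

theorem isCoprime_half_succ_of_odd {k : ℕ} (hk : k % 2 = 1) :
    IsCoprime (((k + 1) / 2 : ℕ) : ℤ) k :=
  ⟨2, -1, by omega⟩

theorem coprime_of_sum_of_squares_decomposition_general (k : ℕ) (hk4 : k % 4 = 3)
    (w₁ : ℤ) (hw : (k : ℤ) ^ k = w₁ ^ 2 + (((k + 1) / 2 : ℕ) : ℤ) ^ (k + 1)) :
    Int.gcd w₁ (((k + 1) / 2 : ℕ) : ℤ) = 1 := by
  have hk_odd : k % 2 = 1 := by omega
  have hm : IsCoprime (((k + 1) / 2 : ℕ) : ℤ) ((k : ℤ) ^ k) :=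
    (isCoprime_half_succ_of_odd hk_odd).pow_right
  rw [hw] at hm
  exact Int.isCoprime_iff_gcd_eq_one.mp (.of_isCoprime_sq_add_pow k.succ_ne_zero hm)

/-- If `k ≡ 3 (mod 4)` is a positive integer and `k^k = w₁² + ((k+1)/2)^{k+1}`,
then `w₁` and `(k+1)/2` are coprime. -/
theorem coprime_of_sum_of_squares_decomposition (k : ℕ) (hk : 0 < k) (hk4 : k % 4 = 3)
    (w₁ : ℤ) (hw : (k : ℤ) ^ k = w₁ ^ 2 + (((k + 1) / 2 : ℕ) : ℤ) ^ (k + 1)) :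
    Int.gcd w₁ (((k + 1) / 2 : ℕ) : ℤ) = 1 :=
  coprime_of_sum_of_squares_decomposition_general k hk4 w₁ hw
end
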